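/- Let α, β ∈ ℝ satisfy 4β < α < 0. Then the ℤ-action generated by Γ_{α,β} on M \ {0} is cocompact: there exists a compact set K ⊆ M \ {0} such that for every p ∈ M \ {0} there is an integer n ∈ ℤ with Γ_{α,β}^n(p) ∈ K. Consequently the quotient of M \ {0} by this ℤ-action is a compact topological space. -/

import Mathlib

open ComplexConjugate

/-- `r(w,z₁,z₂,z₃,z₄) = Im w − (z₁ conj z₂ + z₂ conj z₁ + z₃ conj z₄ + z₄ conj z₃) − |z₁|⁴`. -/
noncomputable def rdef : ℂ × ℂ × ℂ × ℂ × ℂ → ℝ := fun p =>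
  p.1.im
    - (p.2.1 * conj p.2.2.1 + p.2.2.1 * conj p.2.1
        + p.2.2.2.1 * conj p.2.2.2.2 + p.2.2.2.2 * conj p.2.2.2.1).re
    - ‖p.2.1‖ ^ 4

/-- `M = r⁻¹(0)`. -/
noncomputable def Mdef : Set (ℂ × ℂ × ℂ × ℂ × ℂ) := rdef ⁻¹' {0}

/-- `Γ_{α,β}(w,z₁,z₂,z₃,z₄) = (e^{4β}w, e^{β}z₁, e^{3β}z₂, e^{4β−α}z₃, e^{α}z₄)`. -/
noncomputable def Γdef (α β : ℝ) : ℂ × ℂ × ℂ × ℂ × ℂ → ℂ × ℂ × ℂ × ℂ × ℂ := fun p =>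
  ((Real.exp (4 * β) : ℂ) * p.1, (Real.exp β : ℂ) * p.2.1,
    (Real.exp (3 * β) : ℂ) * p.2.2.1, (Real.exp (4 * β - α) : ℂ) * p.2.2.2.1,
    (Real.exp α : ℂ) * p.2.2.2.2)

/-!
`r ∘ Γ = e^{4β} r`, so `Γ` preserves `M`. In the sup norm `Γ` scales each coordinate by a factor
in `[e^{4β}, e^m]`, where `m = max(β, α, 4β - α) < 0`; thus `e^{4β}‖p‖ ≤ ‖Γ p‖ ≤ e^m ‖p‖`. Along
the orbit of `p ≠ 0` the norm tends to `0` forwards and to `∞` backwards, and at the first time it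
is `≤ 1` it is still `≥ e^{4β}`. So the compact set `K = M ∩ {e^{4β} ≤ ‖q‖ ≤ 1}` meets every
orbit, and the quotient is the continuous image of `K`.
-/

open Set

theorem exists_mem_Icc_of_geometric_bounds {u : ℤ → ℝ} {a b : ℝ} (ha : 0 ≤ a) (hb : b < 1)
    (hpos : ∀ n, 0 < u n) (hlow : ∀ n, a * u n ≤ u (n + 1)) (hup : ∀ n, u (n + 1) ≤ b * u n) :
    ∃ n, u n ∈ Icc a 1 := by
  have hb0 : 0 ≤ b := (mul_pos_iff_of_pos_right (hpos 0)).1 ((hpos 1).trans_le (hup 0)) |>.le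
  have hiter : ∀ (m : ℤ) (k : ℕ), u (m + k) ≤ b ^ k * u m := by
    intro m k
    induction k with
    | zero => simp
    | succ k ih =>
      calc u (m + (k + 1 : ℕ)) = u (m + k + 1) := by push_cast; ring_nf
        _ ≤ b * u (m + k) := hup _
        _ ≤ b * (b ^ k * u m) := by gcongr
        _ = b ^ (k + 1) * u m := by ring
  obtain ⟨N, hN⟩ := exists_pow_lt_of_lt_one (one_div_pos.2 (hpos 0)) hb
  obtain ⟨N', hN'⟩ := exists_pow_lt_of_lt_one (hpos 0) hb
  have hsmall : ∃ n, u n ≤ 1 := ⟨N, calc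
    u N = u (0 + N) := by rw [zero_add]
    _ ≤ b ^ N * u 0 := hiter 0 N
    _ ≤ 1 := ((lt_div_iff₀ (hpos 0)).1 hN).le⟩
  have hbdd : ∃ c : ℤ, ∀ n, u n ≤ 1 → c ≤ n := by
    refine ⟨-N', fun n hn => ?_⟩
    by_contra! hlt
    have := hiter n (-n).toNat
    rw [show n + ((-n).toNat : ℤ) = 0 by omega] at this
    have : b ^ (-n).toNat ≤ b ^ N' := pow_le_pow_of_le_one hb0 hb.le (by omega)
    nlinarith [pow_nonneg hb0 (-n).toNat]
  obtain ⟨n, hn, hleast⟩ := Int.exists_least_of_bdd hbdd hsmall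
  have hprev : 1 < u (n - 1) := lt_of_not_ge fun h => by have := hleast _ h; omega
  refine ⟨n, ?_, hn⟩
  calc a ≤ a * u (n - 1) := le_mul_of_one_le_right ha hprev.le
    _ ≤ u n := by simpa using hlow (n - 1)

theorem Equiv.Perm.zpow_apply_mem_iff {α : Type*} {f : Equiv.Perm α} {S : Set α}
    (hf : ∀ x, f x ∈ S ↔ x ∈ S) (n : ℤ) (x : α) : (f ^ n) x ∈ S ↔ x ∈ S := by
  induction n using Int.induction_on generalizing x with
  | zero => rfl
  | succ k ih => rw [zpow_add_one, Equiv.Perm.mul_apply, ih, hf]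
  | pred k ih =>
    rw [zpow_sub_one, Equiv.Perm.mul_apply, ih, ← hf, Equiv.Perm.coe_inv, Equiv.apply_symm_apply]

section GeometricBounds

variable {E : Type*} [NormedAddCommGroup E]

def ScalesBetween (a b : ℝ) (f : E → E) : Prop :=
  ∀ x, a * ‖x‖ ≤ ‖f x‖ ∧ ‖f x‖ ≤ b * ‖x‖

theorem ScalesBetween.prodMap {F : Type*} [NormedAddCommGroup F] {a b : ℝ} (hb : 0 ≤ b)
    {f : E → E} {g : F → F} (hf : ScalesBetween a b f) (hg : ScalesBetween a b g) :
    ScalesBetween a b (Prod.map f g) := by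
  rintro ⟨x, y⟩
  simp only [Prod.norm_def, Prod.map_fst, Prod.map_snd, mul_max_of_nonneg _ _ hb]
  refine ⟨?_, max_le_max (hf x).2 (hg y).2⟩
  rcases le_total ‖x‖ ‖y‖ with hxy | hxy
  · rw [max_eq_right hxy]; exact (hg y).1.trans (le_max_right _ _)
  · rw [max_eq_left hxy]; exact (hf x).1.trans (le_max_left _ _)

theorem scalesBetween_const_mul {𝕜 : Type*} [NormedField 𝕜] {a b : ℝ} {c : 𝕜}
    (ha : a ≤ ‖c‖) (hb : ‖c‖ ≤ b) : ScalesBetween a b (c * ·) := fun x => by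
  rw [norm_mul]
  exact ⟨by gcongr, by gcongr⟩

theorem ScalesBetween.exists_zpow_norm_mem_Icc {f : Equiv.Perm E} {a b : ℝ}
    (hf : ScalesBetween a b f) (ha : 0 ≤ a) (hb : b < 1) {x : E} (hx : x ≠ 0) :
    ∃ n : ℤ, ‖(f ^ n) x‖ ∈ Icc a 1 := by
  have hf0 : f 0 = 0 := norm_le_zero_iff.1 (by simpa using (hf 0).2)
  refine exists_mem_Icc_of_geometric_bounds ha hb (fun n => ?_) (fun n => ?_) (fun n => ?_)
  · rw [norm_pos_iff, Ne, ← Equiv.Perm.zpow_apply_eq_self_of_apply_eq_self hf0 n,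
      EmbeddingLike.apply_eq_iff_eq]
    exact hx
  · rw [add_comm, zpow_one_add, Equiv.Perm.mul_apply]; exact (hf _).1
  · rw [add_comm, zpow_one_add, Equiv.Perm.mul_apply]; exact (hf _).2

theorem ScalesBetween.exists_isCompact_forall_exists_zpow_mem [ProperSpace E]
    {f : Equiv.Perm E} {a b : ℝ} (hf : ScalesBetween a b f) (ha : 0 < a)
    (hb : b < 1) {S : Set E} (hS : IsClosed S) (hfS : ∀ x, f x ∈ S ↔ x ∈ S) :
    ∃ K : Set E, IsCompact K ∧ K ⊆ S \ {0} ∧ ∀ x ∈ S \ {0}, ∃ n : ℤ, (f ^ n) x ∈ K := by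
  refine ⟨S ∩ norm ⁻¹' Icc a 1, ?_, ?_, ?_⟩
  · refine Metric.isCompact_of_isClosed_isBounded (hS.inter (isClosed_Icc.preimage continuous_norm))
      ((Metric.isBounded_closedBall (x := 0) (r := 1)).subset fun x hx => ?_)
    exact mem_closedBall_zero_iff.2 hx.2.2
  · rintro x ⟨hxS, hxa, -⟩
    refine ⟨hxS, ?_⟩
    rintro rfl
    simp only [norm_zero] at hxa
    linarith
  · rintro x ⟨hxS, hx0⟩
    obtain ⟨n, hn⟩ := hf.exists_zpow_norm_mem_Icc ha.le hb hx0
    exact ⟨n, (Equiv.Perm.zpow_apply_mem_iff hfS n x).2 hxS, hn⟩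

end GeometricBounds

theorem compactSpace_quotient_of_isCompact {X : Type*} [TopologicalSpace X] (s : Setoid X)
    {K : Set X} (hK : IsCompact K) (hKs : ∀ x, ∃ y ∈ K, s.r x y) : CompactSpace (Quotient s) := by
  have hsurj : Quotient.mk s '' K = univ := eq_univ_of_forall fun q => by
    obtain ⟨x, rfl⟩ := Quotient.exists_rep q
    obtain ⟨y, hyK, hxy⟩ := hKs x
    exact ⟨y, hyK, Quotient.sound (s.symm hxy)⟩
  exact isCompact_univ_iff.1 (hsurj ▸ hK.image continuous_quotient_mk')

theorem isCompact_subtypeVal_preimage {X : Type*} [TopologicalSpace X] {S K : Set X}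
    (hK : IsCompact K) (hKS : K ⊆ S) : IsCompact (Subtype.val ⁻¹' K : Set S) := by
  rwa [Subtype.isCompact_iff, image_preimage_eq_of_subset (by rwa [Subtype.range_coe])]

theorem rdef_Γdef (α β : ℝ) (p : ℂ × ℂ × ℂ × ℂ × ℂ) :
    rdef (Γdef α β p) = Real.exp (4 * β) * rdef p := by
  obtain ⟨w, z₁, z₂, z₃, z₄⟩ := p
  have hc3 : Real.exp (3 * β) = Real.exp β ^ 3 := by rw [← Real.exp_nat_mul]; norm_num
  have hc4 : Real.exp (4 * β) = Real.exp β ^ 4 := by rw [← Real.exp_nat_mul]; norm_num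
  have hcα : Real.exp (4 * β - α) = Real.exp β ^ 4 / Real.exp α := by rw [Real.exp_sub, hc4]
  have hh : (Real.exp β : ℂ) * z₁ * conj ((Real.exp β ^ 3 : ℝ) * z₂)
      + (Real.exp β ^ 3 : ℝ) * z₂ * conj ((Real.exp β : ℂ) * z₁)
      + ((Real.exp β ^ 4 / Real.exp α : ℝ) : ℂ) * z₃ * conj ((Real.exp α : ℂ) * z₄)
      + (Real.exp α : ℂ) * z₄ * conj (((Real.exp β ^ 4 / Real.exp α : ℝ) : ℂ) * z₃)
      = ((Real.exp β ^ 4 : ℝ) : ℂ) * (z₁ * conj z₂ + z₂ * conj z₁ + z₃ * conj z₄ + z₄ * conj z₃) := by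
    simp only [map_mul, Complex.conj_ofReal]
    push_cast
    field_simp
  simp only [rdef, Γdef]
  rw [hc3, hc4, hcα, hh, Complex.re_ofReal_mul, Complex.im_ofReal_mul, norm_mul, Complex.norm_real,
    Real.norm_of_nonneg (Real.exp_pos β).le]
  ring

theorem Γdef_mem_Mdef_iff (α β : ℝ) (p : ℂ × ℂ × ℂ × ℂ × ℂ) : Γdef α β p ∈ Mdef ↔ p ∈ Mdef := by
  simp only [Mdef, mem_preimage, mem_singleton_iff, rdef_Γdef, mul_eq_zero, Real.exp_ne_zero,
    false_or]

theorem isClosed_Mdef : IsClosed Mdef :=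
  isClosed_singleton.preimage (by unfold rdef; fun_prop)

theorem exists_scalesBetween_Γdef {α β : ℝ} (h1 : 4 * β < α) (h2 : α < 0) :
    ∃ b < 1, ScalesBetween (Real.exp (4 * β)) b (Γdef α β) := by
  set m := max β (max α (4 * β - α))
  have hexp : ∀ t, 4 * β ≤ t → t ≤ m →
      ScalesBetween (Real.exp (4 * β)) (Real.exp m) ((Real.exp t : ℂ) * ·) := fun t h h' =>
    scalesBetween_const_mul
      (by rw [Complex.norm_real, Real.norm_of_nonneg (Real.exp_pos t).le]; exact Real.exp_le_exp.2 h)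
      (by rw [Complex.norm_real, Real.norm_of_nonneg (Real.exp_pos t).le]; exact Real.exp_le_exp.2 h')
  have hb := (Real.exp_pos m).le
  refine ⟨Real.exp m, Real.exp_lt_one_iff.2 (max_lt (by linarith) (max_lt h2 (by linarith))), ?_⟩
  exact (hexp _ le_rfl (le_max_of_le_left (by linarith))).prodMap hb <|
    (hexp _ (by linarith) (le_max_left _ _)).prodMap hb <|
    (hexp _ (by linarith) (le_max_of_le_left (by linarith))).prodMap hb <|
    (hexp _ (by linarith) (le_max_of_le_right (le_max_right _ _))).prodMap hb
    (hexp _ (by linarith) (le_max_of_le_right (le_max_left _ _)))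

/-- If `4β < α < 0`, the `ℤ`-action generated by `Γ_{α,β}` on `M \ {0}` is
cocompact: some compact `K ⊆ M \ {0}` meets every orbit.  Consequently the
quotient of `M \ {0}` by this `ℤ`-action (the quotient by the setoid `s` whose
relation identifies points on the same `Γ_{α,β}`-orbit) is compact. -/
theorem stmt_6 (α β : ℝ) (h1 : 4 * β < α) (h2 : α < 0)
    (Γ : Equiv.Perm (ℂ × ℂ × ℂ × ℂ × ℂ))
    (hΓ : ∀ p, Γ p = Γdef α β p)
    (s : Setoid {p : ℂ × ℂ × ℂ × ℂ × ℂ // p ∈ Mdef \ {0}})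
    (hs : ∀ x y : {p : ℂ × ℂ × ℂ × ℂ × ℂ // p ∈ Mdef \ {0}},
      s.r x y ↔ ∃ n : ℤ, (Γ ^ n) x.val = y.val) :
    (∃ K : Set (ℂ × ℂ × ℂ × ℂ × ℂ), IsCompact K ∧ K ⊆ Mdef \ {0} ∧
        ∀ p ∈ Mdef \ {0}, ∃ n : ℤ, (Γ ^ n) p ∈ K) ∧
      CompactSpace (Quotient s) := by
  have hΓfun : ⇑Γ = Γdef α β := funext hΓ
  obtain ⟨b, hb, hscale⟩ := exists_scalesBetween_Γdef h1 h2
  obtain ⟨K, hK, hKM, hmeets⟩ := (hΓfun ▸ hscale).exists_isCompact_forall_exists_zpow_mem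
    (Real.exp_pos _) hb isClosed_Mdef (hΓfun ▸ Γdef_mem_Mdef_iff α β)
  refine ⟨⟨K, hK, hKM, hmeets⟩, compactSpace_quotient_of_isCompact s
    (isCompact_subtypeVal_preimage hK hKM) fun x => ?_⟩
  obtain ⟨n, hn⟩ := hmeets x x.2
  exact ⟨⟨_, hKM hn⟩, hn, (hs _ _).2 ⟨n, rfl⟩⟩
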